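/- Suppose (X, Y, R) satisfies self-censoring, positivity, and the completeness condition that for each i and each x, the family of conditional distributions f(y_i | x, y_{-i}, R = 1) is complete in y_{-i} (i.e., any function g(y_i) with E{g(Y_i) | x, Y_{-i}, R = 1} = 0 for all y_{-i} must be identically zero). Then the itemwise odds function O_i(x, y_i) is the unique solution of the integral equation E{O(X, Y_i) | X = x, Y_{-i} = y_{-i}, R = 1} = f(x, y_{-i}, R_i = 0, R_{-i} = 1) / f(x, y_{-i}, R = 1), and hence O_i is identified from the observed-data distribution. -/

import Mathlib

/-!
Fix `x`, `y_{-i}` and `y_i`, and let `B = {X = x, Y_i = y_i, R_{-i} = 1}`. Self-censoring says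
that `{Y_{-i} = y_{-i}}` is independent of `R_i` given `B`, so
`p(R_i = 0, Y_{-i} = y_{-i}, B) / p(R_i = 1, Y_{-i} = y_{-i}, B) = p(R_i = 0, B) / p(R_i = 1, B)`,
i.e. `O_i(x, y_i) · p(x, y, R = 1) = p(x, y, R_i = 0, R_{-i} = 1)`; positivity takes care of the
case where the denominator vanishes. Summing over `y_i` shows that `O_i(x, ·)` solves the
integral equation, and completeness forces any other solution to agree with it wherever
`p(x, y_i, R = 1) > 0`.
-/

open Finset
open scoped Classical

noncomputable def pr {Ω : Type*} [Fintype Ω] (μ : Ω → ℝ) (A : Ω → Prop) : ℝ :=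
  ∑ ω, if A ω then μ ω else 0

noncomputable def cpr {Ω : Type*} [Fintype Ω] (μ : Ω → ℝ) (A B : Ω → Prop) : ℝ :=
  pr μ (fun ω => A ω ∧ B ω) / pr μ B

/-- The itemwise odds function `O_i(x, y_i)`. -/
noncomputable def oddsFn {Ω 𝒳 𝒴 : Type*} [Fintype Ω] {p : ℕ} (μ : Ω → ℝ)
    (X : Ω → 𝒳) (Y : Ω → Fin p → 𝒴) (R : Ω → Fin p → Bool)
    (i : Fin p) (x : 𝒳) (yi : 𝒴) : ℝ :=
  cpr μ (fun ω => R ω i = false)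
      (fun ω => X ω = x ∧ Y ω i = yi ∧ ∀ j, j ≠ i → R ω j = true) /
    cpr μ (fun ω => R ω i = true)
      (fun ω => X ω = x ∧ Y ω i = yi ∧ ∀ j, j ≠ i → R ω j = true)

section Events

variable {Ω : Type*} [Fintype Ω] {μ : Ω → ℝ}

lemma pr_nonneg (hμ0 : ∀ ω, 0 ≤ μ ω) (A : Ω → Prop) : 0 ≤ pr μ A :=
  sum_nonneg fun ω _ => by split_ifs <;> simp [hμ0 ω]

lemma pr_congr {A B : Ω → Prop} (h : ∀ ω, A ω ↔ B ω) : pr μ A = pr μ B := by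
  simp only [pr, h]

lemma pr_mono (hμ0 : ∀ ω, 0 ≤ μ ω) {A B : Ω → Prop} (h : ∀ ω, A ω → B ω) :
    pr μ A ≤ pr μ B :=
  sum_le_sum fun ω _ => by
    by_cases hA : A ω
    · simp [hA, h ω hA]
    · by_cases hB : B ω <;> simp [hA, hB, hμ0 ω]

lemma pr_eq_sum_pr_and_eq {𝒴 : Type*} [Fintype 𝒴] (A : Ω → Prop) (f : Ω → 𝒴) :
    pr μ A = ∑ v : 𝒴, pr μ (fun ω => A ω ∧ f ω = v) := by
  unfold pr
  rw [sum_comm]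
  refine sum_congr rfl fun ω _ => ?_
  by_cases hA : A ω <;> simp [hA]

lemma pr_and_pos_of_cpr_pos (hμ0 : ∀ ω, 0 ≤ μ ω) {A B : Ω → Prop} (h : 0 < cpr μ A B) :
    0 < pr μ (fun ω => A ω ∧ B ω) :=
  (pr_nonneg hμ0 _).lt_of_ne fun h0 => by simp [cpr, ← h0] at h

lemma cpr_div_cpr_mul_pr_eq_of_condIndep (hμ0 : ∀ ω, 0 ≤ μ ω) {A A' C B : Ω → Prop}
    (hA : 0 < pr μ B → cpr μ (fun ω => A ω ∧ C ω) B = cpr μ A B * cpr μ C B)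
    (hA' : 0 < pr μ B → cpr μ (fun ω => A' ω ∧ C ω) B = cpr μ A' B * cpr μ C B)
    (hsupp : 0 < pr μ (fun ω => (A' ω ∧ C ω) ∧ B ω) →
      0 < pr μ (fun ω => (A ω ∧ C ω) ∧ B ω)) :
    cpr μ A' B / cpr μ A B * pr μ (fun ω => (A ω ∧ C ω) ∧ B ω)
      = pr μ (fun ω => (A' ω ∧ C ω) ∧ B ω) := by
  rcases (pr_nonneg hμ0 fun ω => (A ω ∧ C ω) ∧ B ω).eq_or_lt with h0 | hACB
  · have h0' : pr μ (fun ω => (A' ω ∧ C ω) ∧ B ω) = 0 :=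
      (pr_nonneg hμ0 _).eq_or_lt.elim Eq.symm fun h => absurd h0 (hsupp h).ne
    rw [← h0, h0', mul_zero]
  · have hAB : 0 < pr μ (fun ω => A ω ∧ B ω) :=
      hACB.trans_le (pr_mono hμ0 fun ω h => ⟨h.1.1, h.2⟩)
    have hB : 0 < pr μ B := hAB.trans_le (pr_mono hμ0 fun ω h => h.2)
    have e := hA hB
    have e' := hA' hB
    simp only [cpr] at e e' ⊢
    field_simp at e e' ⊢
    apply mul_right_cancel₀ hB.ne'
    linear_combination (pr μ fun ω => A' ω ∧ B ω) * e - (pr μ fun ω => A ω ∧ B ω) * e'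

end Events

section SelfCensoring

variable {Ω 𝒳 𝒴 : Type*} [Fintype Ω] {p : ℕ} {μ : Ω → ℝ}
  {X : Ω → 𝒳} {Y : Ω → Fin p → 𝒴} {R : Ω → Fin p → Bool} {i : Fin p} {x : 𝒳}

lemma oddsFn_mul_pr_eq (hμ0 : ∀ ω, 0 ≤ μ ω) (y : Fin p → 𝒴) (yi : 𝒴)
    (hsc : ∀ a : Bool,
      pr μ (fun ω => X ω = x ∧ Y ω i = yi ∧ ∀ j, j ≠ i → R ω j = true) > 0 →
      cpr μ (fun ω => R ω i = a ∧ ∀ j, j ≠ i → Y ω j = y j)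
          (fun ω => X ω = x ∧ Y ω i = yi ∧ ∀ j, j ≠ i → R ω j = true)
        = cpr μ (fun ω => R ω i = a)
            (fun ω => X ω = x ∧ Y ω i = yi ∧ ∀ j, j ≠ i → R ω j = true)
          * cpr μ (fun ω => ∀ j, j ≠ i → Y ω j = y j)
            (fun ω => X ω = x ∧ Y ω i = yi ∧ ∀ j, j ≠ i → R ω j = true))
    (hpos : pr μ (fun ω => X ω = x ∧ ∀ j, Y ω j = Function.update y i yi j) > 0 →
      cpr μ (fun ω => ∀ j, R ω j = true)
        (fun ω => X ω = x ∧ ∀ j, Y ω j = Function.update y i yi j) > 0) :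
    oddsFn μ X Y R i x yi *
        pr μ (fun ω => Y ω i = yi ∧
          X ω = x ∧ (∀ j, j ≠ i → Y ω j = y j) ∧ ∀ j, R ω j = true)
      = pr μ (fun ω => (X ω = x ∧ (∀ j, j ≠ i → Y ω j = y j) ∧
          R ω i = false ∧ ∀ j, j ≠ i → R ω j = true) ∧ Y ω i = yi) := by
  have hY : ∀ ω, (∀ j, Y ω j = Function.update y i yi j) ↔
      Y ω i = yi ∧ ∀ j, j ≠ i → Y ω j = y j :=
    fun ω => Function.forall_update_iff y fun j v => Y ω j = v
  have hR : ∀ ω, (∀ j, R ω j = true) ↔ R ω i = true ∧ ∀ j, j ≠ i → R ω j = true :=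
    fun ω => (and_forall_ne i).symm
  have hobs : ∀ ω, (Y ω i = yi ∧ X ω = x ∧ (∀ j, j ≠ i → Y ω j = y j) ∧ ∀ j, R ω j = true) ↔
      (R ω i = true ∧ ∀ j, j ≠ i → Y ω j = y j) ∧
        X ω = x ∧ Y ω i = yi ∧ ∀ j, j ≠ i → R ω j = true := by
    intro ω; rw [hR]; tauto
  have hsupp : 0 < pr μ (fun ω => (R ω i = false ∧ ∀ j, j ≠ i → Y ω j = y j) ∧
        X ω = x ∧ Y ω i = yi ∧ ∀ j, j ≠ i → R ω j = true) →
      0 < pr μ (fun ω => (R ω i = true ∧ ∀ j, j ≠ i → Y ω j = y j) ∧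
        X ω = x ∧ Y ω i = yi ∧ ∀ j, j ≠ i → R ω j = true) := by
    intro h
    have hxy := h.trans_le <| pr_mono hμ0 (B := fun ω => X ω = x ∧ ∀ j, Y ω j = _)
      fun ω hω => ⟨hω.2.1, (hY ω).2 ⟨hω.2.2.1, hω.1.2⟩⟩
    refine (pr_and_pos_of_cpr_pos hμ0 (hpos hxy)).trans_le (pr_mono hμ0 fun ω hω => ?_)
    rw [hR, hY] at hω
    tauto
  rw [pr_congr hobs]
  exact (cpr_div_cpr_mul_pr_eq_of_condIndep hμ0 (hsc true) (hsc false) hsupp).trans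
    (pr_congr fun ω => by tauto)

lemma oddsFn_solves_odds_equation [Fintype 𝒴] (hμ0 : ∀ ω, 0 ≤ μ ω) (y : Fin p → 𝒴)
    (hsc : ∀ (a : Bool) (yi : 𝒴),
      pr μ (fun ω => X ω = x ∧ Y ω i = yi ∧ ∀ j, j ≠ i → R ω j = true) > 0 →
      cpr μ (fun ω => R ω i = a ∧ ∀ j, j ≠ i → Y ω j = y j)
          (fun ω => X ω = x ∧ Y ω i = yi ∧ ∀ j, j ≠ i → R ω j = true)
        = cpr μ (fun ω => R ω i = a)
            (fun ω => X ω = x ∧ Y ω i = yi ∧ ∀ j, j ≠ i → R ω j = true)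
          * cpr μ (fun ω => ∀ j, j ≠ i → Y ω j = y j)
            (fun ω => X ω = x ∧ Y ω i = yi ∧ ∀ j, j ≠ i → R ω j = true))
    (hpos : ∀ yi : 𝒴,
      pr μ (fun ω => X ω = x ∧ ∀ j, Y ω j = Function.update y i yi j) > 0 →
      cpr μ (fun ω => ∀ j, R ω j = true)
        (fun ω => X ω = x ∧ ∀ j, Y ω j = Function.update y i yi j) > 0) :
    ∑ yi : 𝒴, oddsFn μ X Y R i x yi *
        cpr μ (fun ω => Y ω i = yi)
          (fun ω => X ω = x ∧ (∀ j, j ≠ i → Y ω j = y j) ∧ ∀ j, R ω j = true)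
      = pr μ (fun ω => X ω = x ∧ (∀ j, j ≠ i → Y ω j = y j) ∧
            R ω i = false ∧ ∀ j, j ≠ i → R ω j = true) /
        pr μ (fun ω => X ω = x ∧ (∀ j, j ≠ i → Y ω j = y j) ∧ ∀ j, R ω j = true) := by
  rw [pr_eq_sum_pr_and_eq _ fun ω => Y ω i, sum_div]
  refine sum_congr rfl fun yi _ => ?_
  rw [cpr, ← mul_div_assoc, oddsFn_mul_pr_eq hμ0 y yi (fun a => hsc a yi) (hpos yi)]

end SelfCensoring

theorem stmt5_general {Ω 𝒳 𝒴 : Type*} [Fintype Ω] [Fintype 𝒴] {p : ℕ}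
    (μ : Ω → ℝ) (hμ0 : ∀ ω, 0 ≤ μ ω)
    (X : Ω → 𝒳) (Y : Ω → Fin p → 𝒴) (R : Ω → Fin p → Bool)
    (selfcensor : ∀ (i : Fin p) (a : Bool) (x : 𝒳) (yi : 𝒴) (yv : Fin p → 𝒴)
        (rv : Fin p → Bool),
      pr μ (fun ω => X ω = x ∧ Y ω i = yi ∧ ∀ j, j ≠ i → R ω j = rv j) > 0 →
      cpr μ (fun ω => R ω i = a ∧ ∀ j, j ≠ i → Y ω j = yv j)
          (fun ω => X ω = x ∧ Y ω i = yi ∧ ∀ j, j ≠ i → R ω j = rv j)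
        = cpr μ (fun ω => R ω i = a)
            (fun ω => X ω = x ∧ Y ω i = yi ∧ ∀ j, j ≠ i → R ω j = rv j)
          * cpr μ (fun ω => ∀ j, j ≠ i → Y ω j = yv j)
            (fun ω => X ω = x ∧ Y ω i = yi ∧ ∀ j, j ≠ i → R ω j = rv j))
    (hpos : ∀ (r' : Fin p → Bool) (x : 𝒳) (y : Fin p → 𝒴),
      pr μ (fun ω => X ω = x ∧ ∀ j, Y ω j = y j) > 0 →
      cpr μ (fun ω => ∀ j, R ω j = r' j) (fun ω => X ω = x ∧ ∀ j, Y ω j = y j) > 0)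
    (i : Fin p) (x : 𝒳)
    (complete : ∀ g : 𝒴 → ℝ,
      (∀ y : Fin p → 𝒴,
        pr μ (fun ω => X ω = x ∧ (∀ j, j ≠ i → Y ω j = y j) ∧ ∀ j, R ω j = true) > 0 →
        ∑ yi : 𝒴, g yi *
          cpr μ (fun ω => Y ω i = yi)
            (fun ω => X ω = x ∧ (∀ j, j ≠ i → Y ω j = y j) ∧ ∀ j, R ω j = true) = 0) →
      ∀ yi : 𝒴, pr μ (fun ω => X ω = x ∧ Y ω i = yi ∧ ∀ j, R ω j = true) > 0 → g yi = 0)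
    (O : 𝒴 → ℝ)
    (hO : ∀ y : Fin p → 𝒴,
      pr μ (fun ω => X ω = x ∧ (∀ j, j ≠ i → Y ω j = y j) ∧ ∀ j, R ω j = true) > 0 →
      ∑ yi : 𝒴, O yi *
          cpr μ (fun ω => Y ω i = yi)
            (fun ω => X ω = x ∧ (∀ j, j ≠ i → Y ω j = y j) ∧ ∀ j, R ω j = true)
        = pr μ (fun ω => X ω = x ∧ (∀ j, j ≠ i → Y ω j = y j) ∧
              R ω i = false ∧ ∀ j, j ≠ i → R ω j = true) /
          pr μ (fun ω => X ω = x ∧ (∀ j, j ≠ i → Y ω j = y j) ∧ ∀ j, R ω j = true)) :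
    ∀ yi : 𝒴, pr μ (fun ω => X ω = x ∧ Y ω i = yi ∧ ∀ j, R ω j = true) > 0 →
      O yi = oddsFn μ X Y R i x yi := by
  intro yi hyi
  refine sub_eq_zero.mp (complete (fun yi => O yi - oddsFn μ X Y R i x yi) (fun y hy => ?_) yi hyi)
  rw [sum_congr rfl fun yi _ => sub_mul _ _ _, sum_sub_distrib, hO y hy,
    oddsFn_solves_odds_equation hμ0 y (fun a yi => selfcensor i a x yi y fun _ => true)
      (fun yi => hpos _ x _), sub_self]

/-- Theorem 2, itemwise: under self-censoring, positivity and
completeness of `f(y_i | x, y_{-i}, R = 1)` in `y_{-i}`, the itemwise odds function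
`O_i(x, ·)` is the unique solution of the observed-data integral equation
`E{O(X, Y_i) | x, y_{-i}, R = 1} = f(x, y_{-i}, R_i = 0, R_{-i} = 1) / f(x, y_{-i}, R = 1)`,
hence is identified from the observed-data distribution. -/
theorem stmt5 {Ω 𝒳 𝒴 : Type*} [Fintype Ω] [Fintype 𝒴] {p : ℕ}
    (μ : Ω → ℝ) (hμ0 : ∀ ω, 0 ≤ μ ω) (hμ1 : ∑ ω, μ ω = 1)
    (X : Ω → 𝒳) (Y : Ω → Fin p → 𝒴) (R : Ω → Fin p → Bool)
    (selfcensor : ∀ (i : Fin p) (a : Bool) (x : 𝒳) (yi : 𝒴) (yv : Fin p → 𝒴)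
        (rv : Fin p → Bool),
      pr μ (fun ω => X ω = x ∧ Y ω i = yi ∧ ∀ j, j ≠ i → R ω j = rv j) > 0 →
      cpr μ (fun ω => R ω i = a ∧ ∀ j, j ≠ i → Y ω j = yv j)
          (fun ω => X ω = x ∧ Y ω i = yi ∧ ∀ j, j ≠ i → R ω j = rv j)
        = cpr μ (fun ω => R ω i = a)
            (fun ω => X ω = x ∧ Y ω i = yi ∧ ∀ j, j ≠ i → R ω j = rv j)
          * cpr μ (fun ω => ∀ j, j ≠ i → Y ω j = yv j)
            (fun ω => X ω = x ∧ Y ω i = yi ∧ ∀ j, j ≠ i → R ω j = rv j))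
    (hpos : ∀ (r' : Fin p → Bool) (x : 𝒳) (y : Fin p → 𝒴),
      pr μ (fun ω => X ω = x ∧ ∀ j, Y ω j = y j) > 0 →
      cpr μ (fun ω => ∀ j, R ω j = r' j) (fun ω => X ω = x ∧ ∀ j, Y ω j = y j) > 0)
    (i : Fin p) (x : 𝒳)
    (complete : ∀ g : 𝒴 → ℝ,
      (∀ y : Fin p → 𝒴,
        pr μ (fun ω => X ω = x ∧ (∀ j, j ≠ i → Y ω j = y j) ∧ ∀ j, R ω j = true) > 0 →
        ∑ yi : 𝒴, g yi *
          cpr μ (fun ω => Y ω i = yi)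
            (fun ω => X ω = x ∧ (∀ j, j ≠ i → Y ω j = y j) ∧ ∀ j, R ω j = true) = 0) →
      ∀ yi : 𝒴, pr μ (fun ω => X ω = x ∧ Y ω i = yi ∧ ∀ j, R ω j = true) > 0 → g yi = 0)
    (O : 𝒴 → ℝ)
    (hO : ∀ y : Fin p → 𝒴,
      pr μ (fun ω => X ω = x ∧ (∀ j, j ≠ i → Y ω j = y j) ∧ ∀ j, R ω j = true) > 0 →
      ∑ yi : 𝒴, O yi *
          cpr μ (fun ω => Y ω i = yi)
            (fun ω => X ω = x ∧ (∀ j, j ≠ i → Y ω j = y j) ∧ ∀ j, R ω j = true)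
        = pr μ (fun ω => X ω = x ∧ (∀ j, j ≠ i → Y ω j = y j) ∧
              R ω i = false ∧ ∀ j, j ≠ i → R ω j = true) /
          pr μ (fun ω => X ω = x ∧ (∀ j, j ≠ i → Y ω j = y j) ∧ ∀ j, R ω j = true)) :
    ∀ yi : 𝒴, pr μ (fun ω => X ω = x ∧ Y ω i = yi ∧ ∀ j, R ω j = true) > 0 →
      O yi = oddsFn μ X Y R i x yi :=
  stmt5_general μ hμ0 X Y R selfcensor hpos i x complete O hO
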